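/- Let a group Γ act by homeomorphisms on a locally compact Hausdorff space X whose topology has a basis consisting of compact open sets, and suppose for every x ∈ X there is γ ∈ Γ with γ·x ≠ x. If the action is weakly purely infinite, then the action has paradoxical comparison. -/

import Mathlib

/-
STATEMENT 14: Let a group Γ act by homeomorphisms on a locally compact Hausdorff space
X whose topology has a basis of compact open sets, and suppose every point is moved by
some group element.  If the action is weakly purely infinite, then it has paradoxical
comparison.
-/

open Set Pointwise

/-- `K ≺ V` for a compact set `K` and an open set `V`. -/
def CSubEq (G : Type*) {X : Type*} [Group G] [MulAction G X] [TopologicalSpace X]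
    (K V : Set X) : Prop :=
  ∃ (n : ℕ) (U : Fin n → Set X) (s : Fin n → G),
    (∀ i, IsOpen (U i)) ∧ K ⊆ ⋃ i, U i ∧ (∀ i, s i • U i ⊆ V) ∧
      Pairwise fun i j => Disjoint (s i • U i) (s j • U j)

/-- `U ≺ V` for open sets: `K ≺ V` for every compact `K ⊆ U`. -/
def OSubEq (G : Type*) {X : Type*} [Group G] [MulAction G X] [TopologicalSpace X]
    (U V : Set X) : Prop :=
  ∀ K : Set X, K ⊆ U → IsCompact K → CSubEq G K V

/-- `U ≺_d V` for open sets. -/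
def DSubEq (G : Type*) {X : Type*} [Group G] [MulAction G X] [TopologicalSpace X]
    (U V : Set X) : Prop :=
  ∀ F : Set X, F ⊆ U → IsCompact F →
    ∃ O₁ O₂ : Set X, IsOpen O₁ ∧ IsOpen O₂ ∧ O₁.Nonempty ∧ O₂.Nonempty ∧
      O₁ ⊆ V ∧ O₂ ⊆ V ∧ Disjoint O₁ O₂ ∧ CSubEq G F O₁ ∧ CSubEq G F O₂

/-- The action has paradoxical comparison if `O ≺_d O` for every nonempty open `O`. -/
def ParadoxicalComparison (G X : Type*) [Group G] [MulAction G X]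
    [TopologicalSpace X] : Prop :=
  ∀ O : Set X, IsOpen O → O.Nonempty → DSubEq G O O

/-- The action is purely infinite if `O₁ ≺_d O₂` whenever `O₁ ⊆ Γ·O₂`. -/
def PurelyInfiniteAction (G X : Type*) [Group G] [MulAction G X]
    [TopologicalSpace X] : Prop :=
  ∀ O₁ O₂ : Set X, IsOpen O₁ → IsOpen O₂ → O₁.Nonempty → O₂.Nonempty →
    O₁ ⊆ ⋃ γ : G, γ • O₂ → DSubEq G O₁ O₂

/-- The action is weakly purely infinite if `O₁ ≺ O₂` whenever `O₁ ⊆ Γ·O₂`. -/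
def WeaklyPurelyInfiniteAction (G X : Type*) [Group G] [MulAction G X]
    [TopologicalSpace X] : Prop :=
  ∀ O₁ O₂ : Set X, IsOpen O₁ → IsOpen O₂ → O₁.Nonempty → O₂.Nonempty →
    O₁ ⊆ ⋃ γ : G, γ • O₂ → OSubEq G O₁ O₂

/-
Around every point there is a compact open set `A` moved off itself by some `γ`. Weak pure
infiniteness gives `A ∪ γA ≺ A`; cutting the witnessing translates along `A` and `γA` yields
disjoint open `O₁, O₂ ⊆ A` with `A ≺ O₁` and `γA ≺ O₂`, hence `A ≺ O₂`. Covering a compact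
`F ⊆ O` by finitely many such sets and making them disjoint, these pairs add up to `F ≺_d O`.
-/

/-- `K` embeds twice, disjointly, into `V`: the condition in `≺_d` without the nonemptiness of
`O₁` and `O₂`, which follows from that of `K` by `CSubEq.nonempty`. -/
def CSubEqTwice (G : Type*) {X : Type*} [Group G] [MulAction G X] [TopologicalSpace X]
    (K V : Set X) : Prop :=
  ∃ O₁ O₂ : Set X, IsOpen O₁ ∧ IsOpen O₂ ∧ O₁ ⊆ V ∧ O₂ ⊆ V ∧ Disjoint O₁ O₂ ∧
    CSubEq G K O₁ ∧ CSubEq G K O₂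

section Comparison

variable {G X : Type*} [Group G] [MulAction G X] [TopologicalSpace X]

theorem cSubEq_empty (V : Set X) : CSubEq G ∅ V :=
  ⟨0, Fin.elim0, Fin.elim0, Fin.rec0, empty_subset _, Fin.rec0, fun i => i.elim0⟩

theorem CSubEq.mono_left {K K' V : Set X} (h : CSubEq G K V) (hK : K' ⊆ K) : CSubEq G K' V := by
  obtain ⟨n, U, s, hU, hcov, hsub, hpd⟩ := h
  exact ⟨n, U, s, hU, hK.trans hcov, hsub, hpd⟩

theorem CSubEq.nonempty {K V : Set X} (h : CSubEq G K V) (hK : K.Nonempty) : V.Nonempty := by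
  obtain ⟨n, U, s, -, hcov, hsub, -⟩ := h
  obtain ⟨x, hx⟩ := hK
  obtain ⟨i, hi⟩ := mem_iUnion.1 (hcov hx)
  exact ⟨s i • x, hsub i (smul_mem_smul_set hi)⟩

theorem cSubEq_of_finite {ι : Type*} [Finite ι] {K V : Set X} (U : ι → Set X) (s : ι → G)
    (hU : ∀ i, IsOpen (U i)) (hcov : K ⊆ ⋃ i, U i) (hsub : ∀ i, s i • U i ⊆ V)
    (hpd : Pairwise fun i j => Disjoint (s i • U i) (s j • U j)) : CSubEq G K V := by
  obtain ⟨n, ⟨e⟩⟩ := Finite.exists_equiv_fin ι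
  refine ⟨n, U ∘ e.symm, s ∘ e.symm, fun _ => hU _, hcov.trans ?_, fun _ => hsub _,
    fun i j hij => hpd (e.symm.injective.ne hij)⟩
  exact iUnion_subset fun i => subset_iUnion_of_subset (e i) (by simp)

theorem CSubEq.union {K₁ K₂ V₁ V₂ : Set X} (h₁ : CSubEq G K₁ V₁) (h₂ : CSubEq G K₂ V₂)
    (hV : Disjoint V₁ V₂) : CSubEq G (K₁ ∪ K₂) (V₁ ∪ V₂) := by
  obtain ⟨n₁, U₁, s₁, hU₁, hcov₁, hsub₁, hpd₁⟩ := h₁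
  obtain ⟨n₂, U₂, s₂, hU₂, hcov₂, hsub₂, hpd₂⟩ := h₂
  refine cSubEq_of_finite (Sum.elim U₁ U₂) (Sum.elim s₁ s₂) (Sum.forall.2 ⟨hU₁, hU₂⟩) ?_
    (Sum.forall.2 ⟨fun i => (hsub₁ i).trans subset_union_left,
      fun i => (hsub₂ i).trans subset_union_right⟩) ?_
  · rw [iUnion_sum]
    exact union_subset_union hcov₁ hcov₂
  · rintro (i | i) (j | j) hij
    · exact hpd₁ (fun h => hij (congrArg Sum.inl h))
    · exact hV.mono (hsub₁ i) (hsub₂ j)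
    · exact hV.symm.mono (hsub₂ i) (hsub₁ j)
    · exact hpd₂ (fun h => hij (congrArg Sum.inr h))

theorem CSubEq.of_smul [ContinuousConstSMul G X] {K V : Set X} {g : G} (h : CSubEq G (g • K) V) : CSubEq G K V := by
  obtain ⟨n, U, s, hU, hcov, hsub, hpd⟩ := h
  have hshift : ∀ i, (s i * g) • g⁻¹ • U i = s i • U i := fun i => by rw [mul_smul, smul_inv_smul]
  refine ⟨n, fun i => g⁻¹ • U i, fun i => s i * g, fun i => (hU i).smul _, fun x hx => ?_,
    fun i => (hshift i).symm ▸ hsub i, fun i j hij => by simpa only [hshift] using hpd hij⟩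
  obtain ⟨i, hi⟩ := mem_iUnion.1 (hcov (smul_mem_smul_set hx))
  exact mem_iUnion.2 ⟨i, mem_inv_smul_set_iff.2 hi⟩

/-- Cutting the translates witnessing `A ∪ B ≺ V` along `A` and along `B`. -/
theorem CSubEq.exists_disjoint_of_union [ContinuousConstSMul G X] {A B V : Set X} (h : CSubEq G (A ∪ B) V)
    (hA : IsOpen A) (hB : IsOpen B) (hAB : Disjoint A B) :
    ∃ O₁ O₂ : Set X, IsOpen O₁ ∧ IsOpen O₂ ∧ O₁ ⊆ V ∧ O₂ ⊆ V ∧ Disjoint O₁ O₂ ∧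
      CSubEq G A O₁ ∧ CSubEq G B O₂ := by
  obtain ⟨n, U, s, hU, hcov, hsub, hpd⟩ := h
  have hpiece : ∀ C ⊆ A ∪ B, IsOpen C →
      IsOpen (⋃ i, s i • (U i ∩ C)) ∧ (⋃ i, s i • (U i ∩ C)) ⊆ V ∧
        CSubEq G C (⋃ i, s i • (U i ∩ C)) := by
    intro C hC hCo
    refine ⟨isOpen_iUnion fun i => ((hU i).inter hCo).smul _,
      iUnion_subset fun i => (smul_set_mono inter_subset_left).trans (hsub i),
      ⟨n, fun i => U i ∩ C, s, fun i => (hU i).inter hCo, fun x hx => ?_,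
        subset_iUnion (fun i => s i • (U i ∩ C)),
        fun i j hij => (hpd hij).mono (smul_set_mono inter_subset_left)
          (smul_set_mono inter_subset_left)⟩⟩
    obtain ⟨i, hi⟩ := mem_iUnion.1 (hcov (hC hx))
    exact mem_iUnion.2 ⟨i, hi, hx⟩
  obtain ⟨hO₁, hO₁V, h₁⟩ := hpiece A subset_union_left hA
  obtain ⟨hO₂, hO₂V, h₂⟩ := hpiece B subset_union_right hB
  refine ⟨_, _, hO₁, hO₂, hO₁V, hO₂V, ?_, h₁, h₂⟩
  simp only [disjoint_iUnion_left, disjoint_iUnion_right]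
  intro i j
  rcases eq_or_ne j i with rfl | hij
  · exact (disjoint_smul_set.2 hAB).mono (smul_set_mono inter_subset_right)
      (smul_set_mono inter_subset_right)
  · exact (hpd hij).mono (smul_set_mono inter_subset_left) (smul_set_mono inter_subset_left)

theorem cSubEqTwice_empty : CSubEqTwice G (∅ : Set X) ∅ :=
  ⟨∅, ∅, isOpen_empty, isOpen_empty, subset_rfl, subset_rfl, disjoint_bot_left,
    cSubEq_empty ∅, cSubEq_empty ∅⟩

theorem CSubEqTwice.mono {K K' V V' : Set X} (h : CSubEqTwice G K V) (hK : K' ⊆ K)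
    (hV : V ⊆ V') : CSubEqTwice G K' V' := by
  obtain ⟨O₁, O₂, hO₁, hO₂, hO₁V, hO₂V, hO, h₁, h₂⟩ := h
  exact ⟨O₁, O₂, hO₁, hO₂, hO₁V.trans hV, hO₂V.trans hV, hO, h₁.mono_left hK, h₂.mono_left hK⟩

theorem CSubEqTwice.union {K₁ K₂ V₁ V₂ : Set X} (h₁ : CSubEqTwice G K₁ V₁)
    (h₂ : CSubEqTwice G K₂ V₂) (hV : Disjoint V₁ V₂) :
    CSubEqTwice G (K₁ ∪ K₂) (V₁ ∪ V₂) := by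
  obtain ⟨P₁, P₂, hP₁, hP₂, hP₁V, hP₂V, hP, hK₁P₁, hK₁P₂⟩ := h₁
  obtain ⟨Q₁, Q₂, hQ₁, hQ₂, hQ₁V, hQ₂V, hQ, hK₂Q₁, hK₂Q₂⟩ := h₂
  refine ⟨P₁ ∪ Q₁, P₂ ∪ Q₂, hP₁.union hQ₁, hP₂.union hQ₂, union_subset_union hP₁V hQ₁V,
    union_subset_union hP₂V hQ₂V, ?_, hK₁P₁.union hK₂Q₁ (hV.mono hP₁V hQ₁V),
    hK₁P₂.union hK₂Q₂ (hV.mono hP₂V hQ₂V)⟩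
  exact Disjoint.union_left (Disjoint.union_right hP (hV.mono hP₁V hQ₂V))
    (Disjoint.union_right (hV.symm.mono hQ₁V hP₂V) hQ)

theorem cSubEqTwice_self_of_disjoint_smul (hwpi : WeaklyPurelyInfiniteAction G X)
    [ContinuousConstSMul G X] {A : Set X} (hAc : IsCompact A) (hAo : IsOpen A) {γ : G}
    (hγ : Disjoint (γ • A) A) : CSubEqTwice G A A := by
  rcases A.eq_empty_or_nonempty with rfl | hne
  · exact cSubEqTwice_empty
  have hcover : A ∪ γ • A ⊆ ⋃ g : G, g • A :=
    union_subset (subset_iUnion_of_subset 1 (one_smul G A).ge) (subset_iUnion (· • A) γ)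
  have hAγA : CSubEq G (A ∪ γ • A) A :=
    hwpi _ A (hAo.union (hAo.smul γ)) hAo (hne.mono subset_union_left) hne hcover _ subset_rfl
      (hAc.union (hAc.smul γ))
  obtain ⟨O₁, O₂, hO₁, hO₂, hO₁A, hO₂A, hO, h₁, h₂⟩ :=
    hAγA.exists_disjoint_of_union hAo (hAo.smul γ) hγ.symm
  exact ⟨O₁, O₂, hO₁, hO₂, hO₁A, hO₂A, hO, h₁, h₂.of_smul⟩

theorem cSubEqTwice_biUnion [T2Space X] [ContinuousConstSMul G X]
    (hwpi : WeaklyPurelyInfiniteAction G X) {ι : Type*} (t : Finset ι) (A : ι → Set X)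
    (hAc : ∀ i, IsCompact (A i)) (hAo : ∀ i, IsOpen (A i))
    (hA : ∀ i, ∃ γ : G, Disjoint (γ • A i) (A i)) :
    CSubEqTwice G (⋃ i ∈ t, A i) (⋃ i ∈ t, A i) := by
  classical
  induction t using Finset.induction_on with
  | empty => simpa using cSubEqTwice_empty
  | insert a t _ ih =>
    set K := ⋃ i ∈ t, A i
    have hK : IsClosed K := (t.isCompact_biUnion fun i _ => hAc i).isClosed
    obtain ⟨γ, hγ⟩ := hA a
    have hdiff : CSubEqTwice G (A a \ K) (A a \ K) :=
      cSubEqTwice_self_of_disjoint_smul hwpi ((hAc a).diff (isOpen_biUnion fun i _ => hAo i))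
        ((hAo a).sdiff hK) (hγ.mono (smul_set_mono sdiff_subset) sdiff_subset)
    rw [Finset.set_biUnion_insert, ← sdiff_union_self]
    exact hdiff.union ih disjoint_sdiff_left

theorem exists_isCompact_isOpen_disjoint_smul [T2Space X] [ContinuousConstSMul G X]
    (hbasis : ∃ B : Set (Set X), (∀ O ∈ B, IsCompact O ∧ IsOpen O) ∧
      TopologicalSpace.IsTopologicalBasis B)
    (hfree : ∀ x : X, ∃ γ : G, γ • x ≠ x) {O : Set X} (hO : IsOpen O) {x : X} (hx : x ∈ O) :
    ∃ V : Set X, IsCompact V ∧ IsOpen V ∧ x ∈ V ∧ V ⊆ O ∧ ∃ γ : G, Disjoint (γ • V) V := by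
  obtain ⟨B, hBco, hB⟩ := hbasis
  obtain ⟨γ, hγ⟩ := hfree x
  obtain ⟨W₁, W₂, hW₁, hW₂, hγx, hxW₂, hW⟩ := t2_separation hγ
  obtain ⟨V, hVB, hxV, hVsub⟩ := hB.exists_subset_of_mem_open
    (show x ∈ O ∩ W₂ ∩ γ⁻¹ • W₁ from ⟨⟨hx, hxW₂⟩, mem_inv_smul_set_iff.2 hγx⟩)
    ((hO.inter hW₂).inter (hW₁.smul _))
  refine ⟨V, (hBco V hVB).1, (hBco V hVB).2, hxV, fun y hy => (hVsub hy).1.1, γ, hW.mono ?_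
    fun y hy => (hVsub hy).1.2⟩
  rintro _ ⟨y, hy, rfl⟩
  exact mem_inv_smul_set_iff.1 (hVsub hy).2

end Comparison

theorem weaklyPurelyInfinite_implies_paradoxicalComparison_general {G X : Type*} [Group G]
    [TopologicalSpace X] [T2Space X]
    [MulAction G X] [ContinuousConstSMul G X]
    (hbasis : ∃ B : Set (Set X), (∀ O ∈ B, IsCompact O ∧ IsOpen O) ∧
      TopologicalSpace.IsTopologicalBasis B)
    (hfree : ∀ x : X, ∃ γ : G, γ • x ≠ x)
    (hwpi : WeaklyPurelyInfiniteAction G X) :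
    ParadoxicalComparison G X := by
  intro O hO ⟨x₀, hx₀⟩ F hFO hFc
  have hnbhd : ∀ x : O, ∃ V : Set X, IsCompact V ∧ IsOpen V ∧ x.1 ∈ V ∧ V ⊆ O ∧
      ∃ γ : G, Disjoint (γ • V) V := fun x =>
    exists_isCompact_isOpen_disjoint_smul hbasis hfree hO x.2
  choose V hVc hVo hxV hVO hVγ using hnbhd
  obtain ⟨t, hFt⟩ := (hFc.insert x₀).elim_finite_subcover V hVo fun x hx =>
    mem_iUnion.2 ⟨⟨x, insert_subset hx₀ hFO hx⟩, hxV _⟩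
  obtain ⟨O₁, O₂, hO₁, hO₂, hO₁O, hO₂O, hO₁₂, h₁, h₂⟩ :=
    (cSubEqTwice_biUnion hwpi t V hVc hVo hVγ).mono hFt (iUnion₂_subset fun x _ => hVO x)
  exact ⟨O₁, O₂, hO₁, hO₂, h₁.nonempty (insert_nonempty x₀ F),
    h₂.nonempty (insert_nonempty x₀ F), hO₁O, hO₂O, hO₁₂,
    h₁.mono_left (subset_insert x₀ F), h₂.mono_left (subset_insert x₀ F)⟩

theorem weaklyPurelyInfinite_implies_paradoxicalComparison {G X : Type*} [Group G]
    [TopologicalSpace X] [LocallyCompactSpace X] [T2Space X]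
    [MulAction G X] [ContinuousConstSMul G X]
    (hbasis : ∃ B : Set (Set X), (∀ O ∈ B, IsCompact O ∧ IsOpen O) ∧
      TopologicalSpace.IsTopologicalBasis B)
    (hfree : ∀ x : X, ∃ γ : G, γ • x ≠ x)
    (hwpi : WeaklyPurelyInfiniteAction G X) :
    ParadoxicalComparison G X :=
  weaklyPurelyInfinite_implies_paradoxicalComparison_general hbasis hfree hwpi
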